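/- arXiv:2209.04771 — 5 statements merged into one kernel-verified Lean document; each statement's English description precedes it below -/
import Mathlib

section
/- Let α ∈ (0,1/2], let f̂ be a nonnegative measure on ℝ^d with Υ(0) := (2π)^{−d} ∫ |ξ|^{−2} f̂(dξ) < ∞, and suppose H_α(t) < ∞ for all t > 0. Then Υ_{2α}(0) < ∞; more precisely, Υ_{2α}(0) ≤ H_α(t)/((2π)^d Γ(1−2α)) + Υ(0)/(Γ(1−2α) t^{2α}) for every t > 0. -/
open Real MeasureTheory ENNReal Set

/-!
For `x > 0` and `s = 2α < 1`, subordination gives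
`Γ(1 - s) x^{-2(1-s)} = ∫_0^∞ r^{-s} e^{-r x²} dr`. Splitting at `r = t`, the tail is at most
`t^{-s} ∫_0^∞ e^{-r x²} dr = t^{-s} x^{-2}`, and integrating the head against `μ` gives `H_α(t)`
by Tonelli; Tonelli applies because `∫ e^{-|ξ|²} dμ ≤ H_α(1) < ∞` makes `μ` s-finite.
At `α = 1/2` this bound is void (`Γ 0 = 0` in Mathlib), but then `r^{-1}` is not integrable
at `0`, so `H_α(1) < ∞` forces `μ = 0`.
-/

lemma lintegral_Ioi_rpow_mul_exp_neg_mul {a c : ℝ} (ha : 0 < a) (hc : 0 < c) :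
    ∫⁻ r in Ioi 0, ENNReal.ofReal (r ^ (a - 1) * exp (-(c * r)))
      = ENNReal.ofReal ((1 / c) ^ a * Gamma a) := by
  have hint : IntegrableOn (fun r : ℝ ↦ r ^ (a - 1) * exp (-(c * r))) (Ioi 0) := by
    simpa using integrableOn_rpow_mul_exp_neg_mul_rpow (p := 1) (by linarith) one_pos hc
  rw [← ofReal_integral_eq_lintegral_ofReal hint, integral_rpow_mul_exp_neg_mul_Ioi ha hc]
  filter_upwards [ae_restrict_mem measurableSet_Ioi] with r (hr : 0 < r)
  positivity

lemma lintegral_Ioi_rpow_neg_mul_exp_neg_mul_sq {s x : ℝ} (hs : s < 1) (hx : 0 < x) :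
    ∫⁻ r in Ioi 0, ENNReal.ofReal (r ^ (-s)) * ENNReal.ofReal (exp (-(r * x ^ 2)))
      = ENNReal.ofReal (Gamma (1 - s)) * ENNReal.ofReal (x ^ (-(2 * (1 - s)))) := by
  have hpow : (1 / x ^ 2) ^ (1 - s) = x ^ (-(2 * (1 - s))) := by
    rw [one_div, ← Real.rpow_natCast, ← rpow_neg hx.le, ← rpow_mul hx.le]
    norm_num
  rw [← ENNReal.ofReal_mul (Gamma_nonneg_of_nonneg (by linarith)), mul_comm, ← hpow,
    ← lintegral_Ioi_rpow_mul_exp_neg_mul (by linarith) (by positivity)]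
  refine setLIntegral_congr_fun measurableSet_Ioi fun r (hr : 0 < r) ↦ ?_
  rw [← ENNReal.ofReal_mul (by positivity), mul_comm r]
  norm_num

lemma lintegral_Ioi_rpow_neg_mul_exp_neg_mul_sq_le {s t x : ℝ} (hs : 0 ≤ s) (ht : 0 < t)
    (hx : 0 < x) :
    ∫⁻ r in Ioi t, ENNReal.ofReal (r ^ (-s)) * ENNReal.ofReal (exp (-(r * x ^ 2)))
      ≤ ENNReal.ofReal (t ^ (-s)) * ENNReal.ofReal (x ^ (-2 : ℝ)) := by
  calc ∫⁻ r in Ioi t, ENNReal.ofReal (r ^ (-s)) * ENNReal.ofReal (exp (-(r * x ^ 2)))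
      ≤ ∫⁻ r in Ioi t, ENNReal.ofReal (t ^ (-s)) * ENNReal.ofReal (exp (-(r * x ^ 2))) := by
        refine setLIntegral_mono (by fun_prop) fun r (hr : t < r) ↦ ?_
        gcongr ENNReal.ofReal ?_ * _
        exact rpow_le_rpow_of_nonpos ht hr.le (neg_nonpos.mpr hs)
    _ ≤ ENNReal.ofReal (t ^ (-s)) * ∫⁻ r in Ioi 0, ENNReal.ofReal (exp (-(r * x ^ 2))) := by
        rw [lintegral_const_mul _ (by fun_prop)]
        gcongr
    _ = ENNReal.ofReal (t ^ (-s)) * ENNReal.ofReal (x ^ (-2 : ℝ)) := by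
        have := lintegral_Ioi_rpow_neg_mul_exp_neg_mul_sq (s := 0) one_pos hx
        simp only [neg_zero, Real.rpow_zero, ENNReal.ofReal_one, one_mul, sub_zero, Gamma_one,
          mul_one] at this
        rw [this]

lemma gamma_mul_rpow_le {s t x : ℝ} (hs0 : 0 ≤ s) (hs1 : s < 1) (ht : 0 < t) (hx : 0 ≤ x) :
    ENNReal.ofReal (Gamma (1 - s)) * ENNReal.ofReal (x ^ (-(2 * (1 - s))))
      ≤ (∫⁻ r in Ioc 0 t, ENNReal.ofReal (r ^ (-s)) * ENNReal.ofReal (exp (-(r * x ^ 2))))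
        + ENNReal.ofReal (t ^ (-s)) * ENNReal.ofReal (x ^ (-2 : ℝ)) := by
  rcases hx.eq_or_lt with rfl | hx
  · rw [zero_rpow (by linarith)]
    simp
  rw [← lintegral_Ioi_rpow_neg_mul_exp_neg_mul_sq hs1 hx, ← Ioc_union_Ioi_eq_Ioi ht.le,
    lintegral_union measurableSet_Ioi (Ioc_disjoint_Ioi le_rfl)]
  gcongr
  exact lintegral_Ioi_rpow_neg_mul_exp_neg_mul_sq_le hs0 ht hx

lemma sFinite_of_lintegral_ne_top {X : Type*} [MeasurableSpace X] {μ : Measure X} {f : X → ℝ≥0∞}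
    (hf : Measurable f) (hf0 : ∀ x, f x ≠ 0) (hf_top : ∀ x, f x ≠ ⊤) (hμf : ∫⁻ x, f x ∂μ ≠ ⊤) :
    SFinite μ := by
  have := isFiniteMeasure_withDensity hμf
  rw [← withDensity_inv_same (μ := μ) hf (ae_of_all _ hf0) (ae_of_all _ hf_top)]
  infer_instance

lemma lintegral_Ioc_rpow_neg_eq_top {s t : ℝ} (hs : 1 ≤ s) (ht : 0 < t) :
    ∫⁻ r in Ioc 0 t, ENNReal.ofReal (r ^ (-s)) = ⊤ := by
  by_contra h
  have hint : IntegrableOn (fun r : ℝ ↦ r ^ (-s)) (Ioc 0 t) :=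
    (lintegral_ofReal_ne_top_iff_integrable (by fun_prop)
      (ae_restrict_of_forall_mem measurableSet_Ioc fun r hr ↦ rpow_nonneg hr.1.le _)).mp h
  have := (intervalIntegral.integrableOn_Ioo_rpow_iff ht).mp (hint.mono_set Ioo_subset_Ioc_self)
  linarith

section HeatMass

variable {E : Type*} [NormedAddCommGroup E] [MeasurableSpace E] (μ : Measure E)

noncomputable def heatMass (r : ℝ) : ℝ≥0∞ := ∫⁻ ξ, ENNReal.ofReal (exp (-(r * ‖ξ‖ ^ 2))) ∂μ

lemma heatMass_antitone : Antitone (heatMass μ) := fun r r' hrr' ↦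
  lintegral_mono fun ξ ↦ by gcongr

lemma lintegral_rpow_mul_heatMass_le (s t : ℝ) :
    (∫⁻ r in Ioc 0 t, ENNReal.ofReal (r ^ (-s))) * heatMass μ t
      ≤ ∫⁻ r in Ioc 0 t, ENNReal.ofReal (r ^ (-s)) * heatMass μ r := by
  rw [← lintegral_mul_const _ (by fun_prop)]
  exact setLIntegral_mono ((by fun_prop : Measurable _).mul (heatMass_antitone μ).measurable)
    fun r hr ↦ by gcongr; exact heatMass_antitone μ hr.2

lemma heatMass_one_ne_top {s : ℝ} (hs : 0 ≤ s)
    (h : ∫⁻ r in Ioc 0 1, ENNReal.ofReal (r ^ (-s)) * heatMass μ r ≠ ⊤) : heatMass μ 1 ≠ ⊤ := by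
  have hone : 1 ≤ ∫⁻ r in Ioc (0 : ℝ) 1, ENNReal.ofReal (r ^ (-s)) :=
    calc 1 = ∫⁻ r in Ioc (0 : ℝ) 1, 1 := by simp
      _ ≤ _ := setLIntegral_mono (by fun_prop) fun r hr ↦
        ENNReal.one_le_ofReal.mpr (one_le_rpow_of_pos_of_le_one_of_nonpos hr.1 hr.2 (by linarith))
  exact ne_top_of_le_ne_top h ((le_mul_of_one_le_left' hone).trans
    (lintegral_rpow_mul_heatMass_le μ s 1))

variable [OpensMeasurableSpace E]

lemma heatMass_eq_zero_iff (r : ℝ) : heatMass μ r = 0 ↔ μ = 0 := by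
  rw [heatMass, lintegral_eq_zero_iff (by fun_prop)]
  simp [Filter.EventuallyEq, exp_pos, ae_iff]

lemma sFinite_of_heatMass_ne_top {r : ℝ} (h : heatMass μ r ≠ ⊤) : SFinite μ :=
  sFinite_of_lintegral_ne_top (by fun_prop) (fun _ ↦ by simp [exp_pos]) (fun _ ↦ ofReal_ne_top) h

lemma eq_zero_of_lintegral_rpow_mul_heatMass_ne_top {s t : ℝ} (hs : 1 ≤ s) (ht : 0 < t)
    (h : ∫⁻ r in Ioc 0 t, ENNReal.ofReal (r ^ (-s)) * heatMass μ r ≠ ⊤) : μ = 0 := by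
  have := lintegral_rpow_mul_heatMass_le μ s t
  rw [lintegral_Ioc_rpow_neg_eq_top hs ht] at this
  rw [← heatMass_eq_zero_iff μ t]
  by_contra h0
  exact h (top_le_iff.mp (ENNReal.top_mul h0 ▸ this))

lemma lintegral_lintegral_rpow_mul_exp [SFinite μ] (s t : ℝ) :
    ∫⁻ ξ, (∫⁻ r in Ioc 0 t, ENNReal.ofReal (r ^ (-s)) * ENNReal.ofReal (exp (-(r * ‖ξ‖ ^ 2)))) ∂μ
      = ∫⁻ r in Ioc 0 t, ENNReal.ofReal (r ^ (-s)) * heatMass μ r := by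
  rw [lintegral_lintegral_swap (by fun_prop)]
  refine lintegral_congr fun r ↦ ?_
  rw [heatMass, lintegral_const_mul _ (by fun_prop)]

lemma gamma_mul_lintegral_rpow_le [SFinite μ] {s t : ℝ} (hs0 : 0 ≤ s) (hs1 : s < 1) (ht : 0 < t) :
    ENNReal.ofReal (Gamma (1 - s)) * ∫⁻ ξ, ENNReal.ofReal (‖ξ‖ ^ (-(2 * (1 - s)))) ∂μ
      ≤ (∫⁻ r in Ioc 0 t, ENNReal.ofReal (r ^ (-s)) * heatMass μ r)
        + ENNReal.ofReal (t ^ (-s)) * ∫⁻ ξ, ENNReal.ofReal (‖ξ‖ ^ (-2 : ℝ)) ∂μ := by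
  rw [← lintegral_const_mul _ (by fun_prop), ← lintegral_lintegral_rpow_mul_exp,
    ← lintegral_const_mul _ (by fun_prop), ← lintegral_add_right _ (by fun_prop)]
  exact lintegral_mono fun ξ ↦ gamma_mul_rpow_le hs0 hs1 ht (norm_nonneg ξ)

end HeatMass

lemma ENNReal.inv_mul_le_div_add_div_of_mul_le {a b g h p τ : ℝ≥0∞} (hg0 : g ≠ 0) (hg : g ≠ ⊤)
    (hab : g * a ≤ h + τ⁻¹ * b) : p⁻¹ * a ≤ h / (p * g) + p⁻¹ * b / (g * τ) :=
  calc p⁻¹ * a = p⁻¹ * g⁻¹ * (g * a) := by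
        rw [mul_assoc, ← mul_assoc g⁻¹, ENNReal.inv_mul_cancel hg0 hg, one_mul]
    _ ≤ p⁻¹ * g⁻¹ * (h + τ⁻¹ * b) := by gcongr
    _ = h / (p * g) + p⁻¹ * b / (g * τ) := by
        rw [div_eq_mul_inv, div_eq_mul_inv, ENNReal.mul_inv (Or.inr hg) (Or.inr hg0),
          ENNReal.mul_inv (Or.inl hg0) (Or.inl hg)]
        ring

theorem reverse_implication_H_Upsilon (d : ℕ) (α : ℝ) (hα : α ∈ Set.Ioc (0:ℝ) (1/2))
    (μ : Measure (EuclideanSpace ℝ (Fin d)))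
    (hΥ0 : ENNReal.ofReal ((2*Real.pi) ^ (-(d:ℝ))) *
        ∫⁻ ξ, ENNReal.ofReal (‖ξ‖ ^ (-(2:ℝ))) ∂μ < ⊤)
    (hH : ∀ t : ℝ, 0 < t →
        (∫⁻ r in Set.Ioc (0:ℝ) t,
            ENNReal.ofReal (r ^ (-(2*α))) * ∫⁻ ξ, ENNReal.ofReal (Real.exp (-(r * ‖ξ‖^2))) ∂μ) < ⊤) :
    ENNReal.ofReal ((2*Real.pi) ^ (-(d:ℝ))) *
        ∫⁻ ξ, ENNReal.ofReal (‖ξ‖ ^ (-(2*(1 - 2*α)))) ∂μ < ⊤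
    ∧ ∀ t : ℝ, 0 < t →
        ENNReal.ofReal ((2*Real.pi) ^ (-(d:ℝ))) *
            ∫⁻ ξ, ENNReal.ofReal (‖ξ‖ ^ (-(2*(1 - 2*α)))) ∂μ
          ≤ (∫⁻ r in Set.Ioc (0:ℝ) t,
                ENNReal.ofReal (r ^ (-(2*α))) * ∫⁻ ξ, ENNReal.ofReal (Real.exp (-(r * ‖ξ‖^2))) ∂μ) /
              ENNReal.ofReal ((2*Real.pi) ^ (d:ℝ) * Real.Gamma (1 - 2*α))
            + (ENNReal.ofReal ((2*Real.pi) ^ (-(d:ℝ))) *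
                  ∫⁻ ξ, ENNReal.ofReal (‖ξ‖ ^ (-(2:ℝ))) ∂μ) /
                ENNReal.ofReal (Real.Gamma (1 - 2*α) * t ^ (2*α)) := by
  obtain ⟨hα0, hα_le⟩ := hα
  rcases hα_le.lt_or_eq with hα_lt | rfl
  · have : SFinite μ := sFinite_of_heatMass_ne_top μ
      (heatMass_one_ne_top μ (by positivity) (hH 1 one_pos).ne)
    have hG : 0 < Gamma (1 - 2 * α) := Gamma_pos_of_pos (by linarith)
    refine (and_iff_right_of_imp fun hbound ↦ (hbound 1 one_pos).trans_lt ?_).mpr fun t ht ↦ ?_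
    · have key := gamma_mul_lintegral_rpow_le μ (s := 2 * α) (by positivity) (by linarith) ht
      rw [rpow_neg ht.le, ENNReal.ofReal_inv_of_pos (by positivity)] at key
      rw [ENNReal.ofReal_mul (by positivity), ENNReal.ofReal_mul hG.le, rpow_neg (by positivity),
        ENNReal.ofReal_inv_of_pos (by positivity)]
      exact ENNReal.inv_mul_le_div_add_div_of_mul_le (by positivity) ofReal_ne_top key
    · exact ENNReal.add_lt_top.mpr ⟨ENNReal.div_lt_top (hH 1 one_pos).ne (by simp [hG, pi_pos]),
        ENNReal.div_lt_top hΥ0.ne (by simp [hG])⟩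
  · obtain rfl : μ = 0 :=
      eq_zero_of_lintegral_rpow_mul_heatMass_ne_top μ (by norm_num) one_pos (hH 1 one_pos).ne
    simp
end

section
/- Let ρ(x) = e^{−|x|} on ℝ^d and μ(dx) = |x|^α dx with α > 0. Then there exist constants C, C' > 0 depending only on d and α such that C'(1 + t^α) ≤ G_ρ(t; μ) ≤ C(1 + t^α) for all t > 0. In particular G_ρ(t;μ) is finite for each t but limsup_{t→∞} G_ρ(t;μ) = ∞. -/
open Real MeasureTheory Filter Module

noncomputable def heatKernel (d : ℕ) (t : ℝ) (x : EuclideanSpace ℝ (Fin d)) : ℝ :=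
  (2 * Real.pi * t) ^ (-(d : ℝ) / 2) * Real.exp (-‖x‖ ^ 2 / (2 * t))

/-!
Write `J(t, x) = ∫ G(t, z) |x - z|^α dz`. The bound `|x - z|^α ≤ 2^α (|x|^α + |z|^α)` and,
after symmetrising in `z ↦ -z`, the bound `|x - z|^α + |x + z|^α ≥ max (|x|^α, |z|^α)`,
together with the Gaussian scaling `∫ G(t, z) |z|^α dz = t^{α/2} ∫ G(1, w) |w|^α dw`, show that
`J(t, x)` is comparable to `|x|^α + t^{α/2}` uniformly in `t` and `x`. Squaring and integrating
against `e^{-|x|}`, which has finite moments of every order, gives `G_ρ(t) ≍ 1 + t^α`.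
-/
lemma Real.add_rpow_le_two_rpow_mul_rpow_add_rpow {a b p : ℝ} (ha : 0 ≤ a) (hb : 0 ≤ b)
    (hp : 0 ≤ p) : (a + b) ^ p ≤ 2 ^ p * (a ^ p + b ^ p) :=
  calc (a + b) ^ p ≤ (2 * max a b) ^ p := by
        gcongr; rw [two_mul]; exact add_le_add (le_max_left a b) (le_max_right a b)
    _ = 2 ^ p * max a b ^ p := Real.mul_rpow zero_le_two (ha.trans (le_max_left a b))
    _ ≤ 2 ^ p * (a ^ p + b ^ p) := by
        gcongr
        rcases le_total a b with h | h
        · rw [max_eq_right h]; exact le_add_of_nonneg_left (by positivity)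
        · rw [max_eq_left h]; exact le_add_of_nonneg_right (by positivity)

lemma norm_rpow_le_norm_sub_rpow_add_norm_add_rpow {E : Type*} [NormedAddCommGroup E]
    [NormedSpace ℝ E] {p : ℝ} (hp : 0 ≤ p) (x z : E) :
    ‖x‖ ^ p ≤ ‖x - z‖ ^ p + ‖x + z‖ ^ p := by
  have h2x : 2 * ‖x‖ ≤ ‖x - z‖ + ‖x + z‖ := by
    calc 2 * ‖x‖ = ‖(x - z) + (x + z)‖ := by
          rw [sub_add_add_cancel, ← two_smul ℝ, norm_smul, Real.norm_two]
      _ ≤ ‖x - z‖ + ‖x + z‖ := norm_add_le _ _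
  rcases le_total ‖x - z‖ ‖x + z‖ with h | h
  · calc ‖x‖ ^ p ≤ ‖x + z‖ ^ p := by gcongr; linarith
      _ ≤ _ := le_add_of_nonneg_left (by positivity)
  · calc ‖x‖ ^ p ≤ ‖x - z‖ ^ p := by gcongr; linarith
      _ ≤ _ := le_add_of_nonneg_right (by positivity)

lemma integrable_norm_rpow_mul_exp_neg_mul_norm_rpow {E : Type*} [NormedAddCommGroup E]
    [NormedSpace ℝ E] [FiniteDimensional ℝ E] [MeasurableSpace E] [BorelSpace E]
    (μ : Measure E) [μ.IsAddHaarMeasure] {β p b : ℝ} (hβ : 0 ≤ β) (hp : 0 < p) (hb : 0 < b) :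
    Integrable (fun x : E => ‖x‖ ^ β * exp (-b * ‖x‖ ^ p)) μ := by
  rcases subsingleton_or_nontrivial E with hE | hE
  · exact Integrable.of_finite
  rw [integrable_fun_norm_addHaar μ (f := fun y => y ^ β * exp (-b * y ^ p))]
  have hs : -1 < ((finrank ℝ E - 1 : ℕ) : ℝ) + β := by
    linarith [(Nat.cast_nonneg (finrank ℝ E - 1) : (0 : ℝ) ≤ _)]
  refine (integrableOn_rpow_mul_exp_neg_mul_rpow hs hp hb).congr_fun (fun y hy => ?_)
    measurableSet_Ioi
  simp only [smul_eq_mul]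
  rw [Real.rpow_add hy, Real.rpow_natCast]; ring

section HeatKernel

variable {d : ℕ} {t : ℝ}

local notation "E" => EuclideanSpace ℝ (Fin d)

lemma heatKernel_pos (ht : 0 < t) (x : E) : 0 < heatKernel d t x := by
  unfold heatKernel; positivity

@[fun_prop]
lemma continuous_heatKernel (t : ℝ) : Continuous (heatKernel d t) := by
  unfold heatKernel; fun_prop

lemma heatKernel_neg (t : ℝ) (x : E) : heatKernel d t (-x) = heatKernel d t x := by
  simp [heatKernel]

lemma integrable_heatKernel_mul_norm_rpow (ht : 0 < t) {β : ℝ} (hβ : 0 ≤ β) :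
    Integrable (fun z : E => heatKernel d t z * ‖z‖ ^ β) := by
  refine ((integrable_norm_rpow_mul_exp_neg_mul_norm_rpow volume hβ two_pos
    (inv_pos.2 (mul_pos two_pos ht))).const_mul ((2 * π * t) ^ (-(d : ℝ) / 2))).congr
    (.of_forall fun z => ?_)
  simp only [heatKernel, Real.rpow_two]
  ring_nf

lemma integrable_heatKernel (ht : 0 < t) : Integrable (heatKernel d t) := by
  simpa using integrable_heatKernel_mul_norm_rpow (d := d) ht le_rfl

lemma heatKernel_sqrt_smul (ht : 0 < t) (w : E) :
    heatKernel d t (√t • w) = (√t ^ d)⁻¹ * heatKernel d 1 w := by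
  have hsqrt : √t ^ d = t ^ ((d : ℝ) / 2) := by
    rw [Real.sqrt_eq_rpow, ← Real.rpow_mul_natCast ht.le]; ring_nf
  have hnorm : ‖√t • w‖ ^ 2 = t * ‖w‖ ^ 2 := by
    rw [norm_smul, mul_pow, Real.norm_of_nonneg (Real.sqrt_nonneg t), Real.sq_sqrt ht.le]
  simp only [heatKernel, hnorm, hsqrt, mul_one, Real.mul_rpow (by positivity : 0 ≤ 2 * π) ht.le,
    neg_div, Real.rpow_neg ht.le]
  field_simp

noncomputable def heatMoment (d : ℕ) (β : ℝ) : ℝ :=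
  ∫ w : EuclideanSpace ℝ (Fin d), heatKernel d 1 w * ‖w‖ ^ β

lemma integral_heatKernel_mul_norm_rpow (ht : 0 < t) (β : ℝ) :
    ∫ z : E, heatKernel d t z * ‖z‖ ^ β = t ^ (β / 2) * heatMoment d β := by
  have hs : 0 < √t := Real.sqrt_pos.2 ht
  have hscale := Measure.integral_comp_smul_of_nonneg volume
    (fun z : E => heatKernel d t z * ‖z‖ ^ β) √t (hR := hs.le)
  simp only [heatKernel_sqrt_smul ht, norm_smul, Real.norm_of_nonneg hs.le,
    Real.mul_rpow hs.le (norm_nonneg _), finrank_euclideanSpace_fin, smul_eq_mul] at hscale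
  have hsqrt : √t ^ β = t ^ (β / 2) := by
    rw [Real.sqrt_eq_rpow, ← Real.rpow_mul ht.le]; ring_nf
  rw [heatMoment, ← hsqrt]
  calc ∫ z : E, heatKernel d t z * ‖z‖ ^ β
      = √t ^ d * ((√t ^ d)⁻¹ * ∫ z : E, heatKernel d t z * ‖z‖ ^ β) := by
        field_simp
    _ = _ := by
        rw [← hscale, ← integral_const_mul, ← integral_const_mul]
        congr 1 with w
        field_simp

lemma integral_heatKernel (ht : 0 < t) : ∫ z : E, heatKernel d t z = heatMoment d 0 := by
  simpa using integral_heatKernel_mul_norm_rpow (d := d) ht 0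

lemma heatMoment_nonneg (d : ℕ) (β : ℝ) : 0 ≤ heatMoment d β :=
  integral_nonneg fun w => mul_nonneg (heatKernel_pos one_pos w).le (by positivity)

lemma heatMoment_pos (hd : 1 ≤ d) {β : ℝ} (hβ : 0 ≤ β) : 0 < heatMoment d β := by
  have : Nonempty (Fin d) := ⟨⟨0, hd⟩⟩
  obtain ⟨w, hw⟩ := exists_ne (0 : E)
  refine integral_pos_of_integrable_nonneg_nonzero (x := w)
    (by fun_prop (disch := exact fun _ => Or.inr hβ))
    (integrable_heatKernel_mul_norm_rpow one_pos hβ)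
    (fun w => mul_nonneg (heatKernel_pos one_pos w).le (by positivity)) ?_
  exact (mul_pos (heatKernel_pos one_pos w) (by positivity)).ne'

end HeatKernel

section HeatFlow

variable {d : ℕ} {α t : ℝ}

local notation "E" => EuclideanSpace ℝ (Fin d)

/-- The paper's `J₀(t, x; μ)` for `μ(dy) = |y|^α dy`. -/
noncomputable def heatFlowRpow (d : ℕ) (α t : ℝ) (x : EuclideanSpace ℝ (Fin d)) : ℝ :=
  ∫ y, heatKernel d t (x - y) * ‖y‖ ^ α

lemma heatKernel_mul_norm_sub_rpow_le (ht : 0 < t) (hα : 0 ≤ α) (x z : E) :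
    heatKernel d t z * ‖x - z‖ ^ α
      ≤ 2 ^ α * ‖x‖ ^ α * heatKernel d t z + 2 ^ α * (heatKernel d t z * ‖z‖ ^ α) := by
  have hG := (heatKernel_pos ht z).le
  calc heatKernel d t z * ‖x - z‖ ^ α
      ≤ heatKernel d t z * (2 ^ α * (‖x‖ ^ α + ‖z‖ ^ α)) := by
        gcongr
        exact (Real.rpow_le_rpow (norm_nonneg _) (norm_sub_le x z) hα).trans
          (Real.add_rpow_le_two_rpow_mul_rpow_add_rpow (norm_nonneg _) (norm_nonneg _) hα)
    _ = _ := by ring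

lemma integrable_heatKernel_mul_norm_sub_rpow (ht : 0 < t) (hα : 0 ≤ α) (x : E) :
    Integrable (fun z : E => heatKernel d t z * ‖x - z‖ ^ α) := by
  refine (((integrable_heatKernel ht).const_mul (2 ^ α * ‖x‖ ^ α)).add
    ((integrable_heatKernel_mul_norm_rpow ht hα).const_mul (2 ^ α))).mono'
    (by fun_prop (disch := exact fun _ => Or.inr hα)) (.of_forall fun z => ?_)
  rw [Real.norm_of_nonneg (mul_nonneg (heatKernel_pos ht z).le (by positivity))]
  exact heatKernel_mul_norm_sub_rpow_le ht hα x z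

lemma heatFlowRpow_eq_integral_sub (x : E) :
    heatFlowRpow d α t x = ∫ z : E, heatKernel d t z * ‖x - z‖ ^ α := by
  rw [heatFlowRpow, ← integral_sub_left_eq_self _ volume x]
  simp only [sub_sub_cancel]

lemma heatFlowRpow_eq_integral_add (x : E) :
    heatFlowRpow d α t x = ∫ z : E, heatKernel d t z * ‖x + z‖ ^ α := by
  rw [heatFlowRpow_eq_integral_sub, ← integral_neg_eq_self]
  simp only [heatKernel_neg, sub_neg_eq_add]

lemma heatFlowRpow_nonneg (ht : 0 < t) (x : E) : 0 ≤ heatFlowRpow d α t x :=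
  integral_nonneg fun y => mul_nonneg (heatKernel_pos ht _).le (by positivity)

@[fun_prop]
lemma measurable_heatFlowRpow : Measurable (heatFlowRpow d α t) :=
  (show Measurable fun p : E × E => heatKernel d t (p.1 - p.2) * ‖p.2‖ ^ α by fun_prop)
    |>.stronglyMeasurable.integral_prod_right'.measurable

lemma heatFlowRpow_le (ht : 0 < t) (hα : 0 ≤ α) (x : E) :
    heatFlowRpow d α t x ≤ 2 ^ α * (heatMoment d 0 * ‖x‖ ^ α + heatMoment d α * t ^ (α / 2)) := by
  have hmass := (integrable_heatKernel (d := d) ht).const_mul (2 ^ α * ‖x‖ ^ α)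
  have hmom := (integrable_heatKernel_mul_norm_rpow (d := d) ht hα).const_mul (2 ^ α)
  calc heatFlowRpow d α t x
      ≤ ∫ z : E, (2 ^ α * ‖x‖ ^ α * heatKernel d t z
          + 2 ^ α * (heatKernel d t z * ‖z‖ ^ α)) := by
        rw [heatFlowRpow_eq_integral_sub]
        exact integral_mono (integrable_heatKernel_mul_norm_sub_rpow ht hα x) (hmass.add hmom)
          (heatKernel_mul_norm_sub_rpow_le ht hα x)
    _ = _ := by
        rw [integral_add hmass hmom, integral_const_mul, integral_const_mul, integral_heatKernel ht,
          integral_heatKernel_mul_norm_rpow ht]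
        ring

lemma le_heatFlowRpow (ht : 0 < t) (hα : 0 ≤ α) (x : E) :
    heatMoment d 0 * ‖x‖ ^ α + heatMoment d α * t ^ (α / 2) ≤ 4 * heatFlowRpow d α t x := by
  have hsub := integrable_heatKernel_mul_norm_sub_rpow ht hα x
  have hadd : Integrable fun z : E => heatKernel d t z * ‖x + z‖ ^ α := by
    simpa [heatKernel_neg, sub_neg_eq_add] using hsub.comp_neg
  have hsum : Integrable fun z : E => heatKernel d t z * (‖x - z‖ ^ α + ‖x + z‖ ^ α) :=
    (hsub.add hadd).congr (.of_forall fun z => (mul_add _ _ _).symm)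
  have htwice : 2 * heatFlowRpow d α t x
      = ∫ z : E, heatKernel d t z * (‖x - z‖ ^ α + ‖x + z‖ ^ α) := by
    simp only [mul_add]
    rw [integral_add hsub hadd, ← heatFlowRpow_eq_integral_sub, ← heatFlowRpow_eq_integral_add]
    ring
  have hx : heatMoment d 0 * ‖x‖ ^ α ≤ 2 * heatFlowRpow d α t x := by
    rw [htwice, ← integral_heatKernel ht, ← integral_mul_const]
    refine integral_mono ((integrable_heatKernel ht).mul_const _) hsum fun z => ?_
    exact mul_le_mul_of_nonneg_left (norm_rpow_le_norm_sub_rpow_add_norm_add_rpow hα x z)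
      (heatKernel_pos ht z).le
  have hz : heatMoment d α * t ^ (α / 2) ≤ 2 * heatFlowRpow d α t x := by
    rw [htwice, mul_comm, ← integral_heatKernel_mul_norm_rpow ht]
    refine integral_mono (integrable_heatKernel_mul_norm_rpow ht hα) hsum fun z => ?_
    refine mul_le_mul_of_nonneg_left ?_ (heatKernel_pos ht z).le
    simpa [norm_sub_rev z x, add_comm z x] using
      norm_rpow_le_norm_sub_rpow_add_norm_add_rpow hα z x
  linarith

end HeatFlow

section WeightedEnergy

variable {d : ℕ} {α t : ℝ}

local notation "E" => EuclideanSpace ℝ (Fin d)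

noncomputable def expMoment (d : ℕ) (β : ℝ) : ℝ :=
  ∫ x : EuclideanSpace ℝ (Fin d), ‖x‖ ^ β * exp (-‖x‖)

lemma integrable_norm_rpow_mul_exp_neg_norm {β : ℝ} (hβ : 0 ≤ β) :
    Integrable (fun x : E => ‖x‖ ^ β * exp (-‖x‖)) := by
  simpa using integrable_norm_rpow_mul_exp_neg_mul_norm_rpow (volume : Measure E) hβ one_pos one_pos

lemma expMoment_pos (hd : 1 ≤ d) {β : ℝ} (hβ : 0 ≤ β) : 0 < expMoment d β := by
  have : Nonempty (Fin d) := ⟨⟨0, hd⟩⟩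
  obtain ⟨x, hx⟩ := exists_ne (0 : E)
  refine integral_pos_of_integrable_nonneg_nonzero (x := x)
    (by fun_prop (disch := exact fun _ => Or.inr hβ)) (integrable_norm_rpow_mul_exp_neg_norm hβ)
    (fun x => by positivity) ?_
  exact (mul_pos (by positivity) (exp_pos _)).ne'

/-- The quantity `G_ρ(t; μ)` for `ρ(x) = e^{-|x|}` and `μ(dy) = |y|^α dy`. -/
noncomputable def weightedHeatEnergy (d : ℕ) (α t : ℝ) : ℝ :=
  ∫ x : EuclideanSpace ℝ (Fin d), heatFlowRpow d α t x ^ 2 * exp (-‖x‖)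

lemma weightedHeatEnergy_mem_Icc (ht : 0 < t) (hα : 0 ≤ α) :
    weightedHeatEnergy d α t ∈ Set.Icc
      ((heatMoment d 0 ^ 2 * expMoment d (2 * α) + heatMoment d α ^ 2 * expMoment d 0 * t ^ α) / 16)
      (2 * (2 ^ α) ^ 2 * (heatMoment d 0 ^ 2 * expMoment d (2 * α)
        + heatMoment d α ^ 2 * expMoment d 0 * t ^ α)) := by
  set a : E → ℝ := fun x => heatMoment d 0 * ‖x‖ ^ α
  set b := heatMoment d α * t ^ (α / 2)
  set g : E → ℝ := fun x => (a x ^ 2 + b ^ 2) * exp (-‖x‖)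
  have hg_eq : g = fun x => heatMoment d 0 ^ 2 * (‖x‖ ^ (2 * α) * exp (-‖x‖))
      + heatMoment d α ^ 2 * t ^ α * (‖x‖ ^ (0 : ℝ) * exp (-‖x‖)) := by
    ext x
    simp only [g, a, b, mul_pow, Real.rpow_zero, ← Real.rpow_mul_natCast (norm_nonneg x),
      ← Real.rpow_mul_natCast ht.le]
    ring_nf
  have hg_int : Integrable g := by
    rw [hg_eq]
    exact ((integrable_norm_rpow_mul_exp_neg_norm (by positivity)).const_mul _).add
      ((integrable_norm_rpow_mul_exp_neg_norm le_rfl).const_mul _)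
  have hg_integral : ∫ x, g x = heatMoment d 0 ^ 2 * expMoment d (2 * α)
      + heatMoment d α ^ 2 * expMoment d 0 * t ^ α := by
    rw [hg_eq, integral_add ((integrable_norm_rpow_mul_exp_neg_norm (by positivity)).const_mul _)
      ((integrable_norm_rpow_mul_exp_neg_norm le_rfl).const_mul _), integral_const_mul,
      integral_const_mul, expMoment, expMoment]
    ring
  have ha (x : E) : 0 ≤ a x := mul_nonneg (heatMoment_nonneg d 0) (by positivity)
  have hb : 0 ≤ b := mul_nonneg (heatMoment_nonneg d α) (by positivity)
  have hlo (x : E) : g x / 16 ≤ heatFlowRpow d α t x ^ 2 * exp (-‖x‖) := by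
    have h := le_heatFlowRpow ht hα x
    have hJ := heatFlowRpow_nonneg (α := α) ht x
    have hsq : (a x ^ 2 + b ^ 2) / 16 ≤ heatFlowRpow d α t x ^ 2 := by nlinarith [ha x]
    calc g x / 16 = (a x ^ 2 + b ^ 2) / 16 * exp (-‖x‖) := by ring
      _ ≤ _ := by gcongr
  have hhi (x : E) : heatFlowRpow d α t x ^ 2 * exp (-‖x‖) ≤ 2 * (2 ^ α) ^ 2 * g x := by
    have h := heatFlowRpow_le ht hα x
    have hJ := heatFlowRpow_nonneg (α := α) ht x
    have hsq : heatFlowRpow d α t x ^ 2 ≤ 2 * (2 ^ α) ^ 2 * (a x ^ 2 + b ^ 2) := by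
      nlinarith [sq_nonneg (a x - b), mul_le_mul h h hJ (hJ.trans h)]
    calc heatFlowRpow d α t x ^ 2 * exp (-‖x‖)
        ≤ 2 * (2 ^ α) ^ 2 * (a x ^ 2 + b ^ 2) * exp (-‖x‖) := by gcongr
      _ = _ := by ring
  have hF_int : Integrable fun x : E => heatFlowRpow d α t x ^ 2 * exp (-‖x‖) :=
    integrable_of_le_of_le (by fun_prop) (.of_forall hlo) (.of_forall hhi)
      (hg_int.div_const 16) (hg_int.const_mul _)
  constructor
  · rw [← hg_integral, ← integral_div]
    exact integral_mono (hg_int.div_const 16) hF_int hlo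
  · rw [← hg_integral, ← integral_const_mul]
    exact integral_mono hF_int (hg_int.const_mul _) hhi

end WeightedEnergy

theorem growing_tail_G_rho (d : ℕ) (hd : 1 ≤ d) (α : ℝ) (hα : 0 < α) :
    ∃ C C' : ℝ, 0 < C ∧ 0 < C' ∧
      (∀ t : ℝ, 0 < t →
        C' * (1 + t ^ α)
            ≤ (∫ x, (∫ y, heatKernel d t (x - y) * ‖y‖ ^ α) ^ 2 * Real.exp (-‖x‖))
          ∧ (∫ x, (∫ y, heatKernel d t (x - y) * ‖y‖ ^ α) ^ 2 * Real.exp (-‖x‖))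
            ≤ C * (1 + t ^ α))
      ∧ Tendsto
          (fun t : ℝ => ∫ x, (∫ y, heatKernel d t (x - y) * ‖y‖ ^ α) ^ 2 * Real.exp (-‖x‖))
          atTop atTop := by
  set A := heatMoment d 0 ^ 2 * expMoment d (2 * α)
  set B := heatMoment d α ^ 2 * expMoment d 0
  have hA : 0 < A := by
    have := heatMoment_pos hd le_rfl; have := expMoment_pos hd (by positivity : 0 ≤ 2 * α)
    positivity
  have hB : 0 < B := by
    have := heatMoment_pos hd hα.le; have := expMoment_pos hd le_rfl
    positivity
  have hbounds (t : ℝ) (ht : 0 < t) : min A B / 16 * (1 + t ^ α) ≤ weightedHeatEnergy d α t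
      ∧ weightedHeatEnergy d α t ≤ 2 * (2 ^ α) ^ 2 * max A B * (1 + t ^ α) := by
    obtain ⟨hlo, hhi⟩ := weightedHeatEnergy_mem_Icc (d := d) ht hα.le
    have htα : 0 ≤ t ^ α := by positivity
    refine ⟨le_trans ?_ hlo, hhi.trans ?_⟩
    · nlinarith [min_le_left A B, min_le_right A B]
    · rw [mul_assoc _ (max A B)]
      gcongr
      nlinarith [le_max_left A B, le_max_right A B]
  refine ⟨2 * (2 ^ α) ^ 2 * max A B, min A B / 16, by positivity, by positivity, hbounds, ?_⟩
  refine tendsto_atTop_mono' atTop ((eventually_gt_atTop 0).mono fun t ht => (hbounds t ht).1) ?_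
  exact (tendsto_atTop_add_const_left atTop 1 (tendsto_rpow_atTop hα)).const_mul_atTop
    (by positivity)
end

section
/- Define ψ: [0,∞) → ℝ by ψ(r) = sgn(2−r)|r−2|^{α+1} + sgn(r−1)|r−1|^{α+1} for a fixed α > 0. Then inf_{r ≥ 0} ψ(r)/√(1 + r^{2α}) > 0. -/
/-!
Writing `q = 2 ^ (α + 1)` and `w r = max 1 (r - 1) ^ α`, one has `√(1 + r ^ (2α)) ≤ 1 + r ^ α ≤ q w`
and `w ≤ q ψ`, hence `ψ r ≥ q⁻² √(1 + r ^ (2α))`. The second bound comes from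
`a ^ (α + 1) - b ^ (α + 1) ≥ a ^ α (a - b)` for `0 ≤ b ≤ a`: on `[0, 1]` and on `[2, ∞)` it gives
`ψ r ≥ (2 - r) ^ α ≥ 1` and `ψ r ≥ (r - 1) ^ α`, while on `[1, 2]` one of the two positive summands
of `ψ` has base at least `1 / 2`.
-/

open Real

namespace Real

theorem sign_mul_abs_rpow_of_nonneg {x p : ℝ} (hx : 0 ≤ x) (hp : p ≠ 0) :
    sign x * |x| ^ p = x ^ p := by
  rcases hx.eq_or_lt with rfl | hx
  · simp [zero_rpow hp]
  · rw [sign_of_pos hx, abs_of_pos hx, one_mul]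

theorem sign_mul_abs_rpow_of_nonpos {x p : ℝ} (hx : x ≤ 0) (hp : p ≠ 0) :
    sign x * |x| ^ p = -(-x) ^ p := by
  rw [← sign_mul_abs_rpow_of_nonneg (neg_nonneg.mpr hx) hp, sign_neg, abs_neg, neg_mul, neg_neg]

theorem rpow_mul_sub_le_rpow_add_one_sub_rpow_add_one {a b p : ℝ} (hb : 0 ≤ b) (hba : b ≤ a)
    (hp : 0 ≤ p) : a ^ p * (a - b) ≤ a ^ (p + 1) - b ^ (p + 1) := by
  have hp1 : p + 1 ≠ 0 := by linarith
  rw [rpow_add_one' (hb.trans hba) hp1, rpow_add_one' hb hp1]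
  nlinarith [rpow_le_rpow hb hba hp]

end Real

noncomputable def psi (α r : ℝ) : ℝ :=
  Real.sign (2 - r) * |r - 2| ^ (α + 1) + Real.sign (r - 1) * |r - 1| ^ (α + 1)

section psi

variable {α r : ℝ}

theorem psi_of_le_one (hα : 0 ≤ α) (hr : r ≤ 1) :
    psi α r = (2 - r) ^ (α + 1) - (1 - r) ^ (α + 1) := by
  have hα1 : α + 1 ≠ 0 := by linarith
  rw [psi, abs_sub_comm r 2, sign_mul_abs_rpow_of_nonneg (x := 2 - r) (by linarith) hα1,
    sign_mul_abs_rpow_of_nonpos (x := r - 1) (by linarith) hα1, neg_sub, ← sub_eq_add_neg]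

theorem psi_of_mem_Icc (hα : 0 ≤ α) (hr : r ∈ Set.Icc 1 2) :
    psi α r = (2 - r) ^ (α + 1) + (r - 1) ^ (α + 1) := by
  have hα1 : α + 1 ≠ 0 := by linarith
  rw [psi, abs_sub_comm r 2, sign_mul_abs_rpow_of_nonneg (x := 2 - r) (by linarith [hr.2]) hα1,
    sign_mul_abs_rpow_of_nonneg (x := r - 1) (by linarith [hr.1]) hα1]

theorem psi_of_two_le (hα : 0 ≤ α) (hr : 2 ≤ r) :
    psi α r = (r - 1) ^ (α + 1) - (r - 2) ^ (α + 1) := by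
  have hα1 : α + 1 ≠ 0 := by linarith
  rw [psi, abs_sub_comm r 2, sign_mul_abs_rpow_of_nonpos (x := 2 - r) (by linarith) hα1,
    sign_mul_abs_rpow_of_nonneg (x := r - 1) (by linarith) hα1, neg_sub, neg_add_eq_sub]

theorem max_one_sub_one_rpow_le_psi (hα : 0 ≤ α) :
    max 1 (r - 1) ^ α ≤ 2 ^ (α + 1) * psi α r := by
  have hq : 1 ≤ (2 : ℝ) ^ (α + 1) := one_le_rpow one_le_two (by linarith)
  rcases le_or_gt r 1 with hr1 | hr1
  · have hψ : 1 ≤ psi α r := by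
      rw [psi_of_le_one hα hr1]
      calc (1 : ℝ) ≤ (2 - r) ^ α * ((2 - r) - (1 - r)) := by
            rw [show (2 - r) - (1 - r) = 1 by ring, mul_one]
            exact one_le_rpow (by linarith) hα
        _ ≤ _ := rpow_mul_sub_le_rpow_add_one_sub_rpow_add_one (by linarith) (by linarith) hα
    rw [max_eq_left (by linarith), one_rpow]
    nlinarith
  rcases le_or_gt r 2 with hr2 | hr2
  · rw [max_eq_left (by linarith), one_rpow, psi_of_mem_Icc hα ⟨hr1.le, hr2⟩]
    have hhalf : (2 : ℝ) ^ (α + 1) * 2⁻¹ ^ (α + 1) = 1 := by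
      rw [inv_rpow zero_le_two, mul_inv_cancel₀ (by positivity)]
    have h2r := rpow_nonneg (show (0 : ℝ) ≤ 2 - r by linarith) (α + 1)
    have hr1' := rpow_nonneg (show (0 : ℝ) ≤ r - 1 by linarith) (α + 1)
    rcases le_total r (3 / 2) with hr' | hr'
    · have := rpow_le_rpow (by norm_num) (show (2 : ℝ)⁻¹ ≤ 2 - r by linarith) (by linarith : 0 ≤ α + 1)
      nlinarith
    · have := rpow_le_rpow (by norm_num) (show (2 : ℝ)⁻¹ ≤ r - 1 by linarith) (by linarith : 0 ≤ α + 1)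
      nlinarith
  · have hψ : (r - 1) ^ α ≤ psi α r := by
      rw [psi_of_two_le hα hr2.le]
      calc (r - 1) ^ α = (r - 1) ^ α * ((r - 1) - (r - 2)) := by ring
        _ ≤ _ := rpow_mul_sub_le_rpow_add_one_sub_rpow_add_one (by linarith) (by linarith) hα
    have := rpow_nonneg (show (0 : ℝ) ≤ r - 1 by linarith) α
    rw [max_eq_right (by linarith)]
    nlinarith

end psi

theorem one_add_rpow_le_max_one_sub_one_rpow {α r : ℝ} (hα : 0 ≤ α) (hr : 0 ≤ r) :
    1 + r ^ α ≤ 2 ^ (α + 1) * max 1 (r - 1) ^ α := by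
  have hw : 1 ≤ max 1 (r - 1) ^ α := one_le_rpow (le_max_left _ _) hα
  have h2 : 1 ≤ (2 : ℝ) ^ α := one_le_rpow one_le_two hα
  have hr2 : r ^ α ≤ 2 ^ α * max 1 (r - 1) ^ α := by
    rw [← mul_rpow zero_le_two (by positivity)]
    refine rpow_le_rpow hr ?_ hα
    rcases le_total r 2 with h | h
    · linarith [le_max_left 1 (r - 1)]
    · linarith [le_max_right 1 (r - 1)]
  rw [rpow_add_one two_ne_zero]
  nlinarith

theorem sqrt_one_add_rpow_two_mul_le {α r : ℝ} (hr : 0 ≤ r) :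
    √(1 + r ^ (2 * α)) ≤ 1 + r ^ α := by
  have hrα := rpow_nonneg hr α
  rw [sqrt_le_iff, mul_comm, rpow_mul hr, rpow_two]
  constructor <;> nlinarith

theorem psi_uniform_lower_bound (α : ℝ) (hα : 0 < α) :
    ∃ c : ℝ, 0 < c ∧ ∀ r : ℝ, 0 ≤ r →
      c * Real.sqrt (1 + r ^ (2 * α))
        ≤ Real.sign (2 - r) * |r - 2| ^ (α + 1) + Real.sign (r - 1) * |r - 1| ^ (α + 1) := by
  set q : ℝ := 2 ^ (α + 1)
  have hq : 0 < q := by positivity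
  refine ⟨(q ^ 2)⁻¹, by positivity, fun r hr => ?_⟩
  rw [inv_mul_le_iff₀ (by positivity)]
  calc √(1 + r ^ (2 * α)) ≤ 1 + r ^ α := sqrt_one_add_rpow_two_mul_le hr
    _ ≤ q * max 1 (r - 1) ^ α := one_add_rpow_le_max_one_sub_one_rpow hα.le hr
    _ ≤ q * (q * psi α r) := by gcongr; exact max_one_sub_one_rpow_le_psi hα.le
    _ = q ^ 2 * psi α r := by ring
end

section
/- For b > 1, the weight ρ_b(x) = exp(−|x|^b) on ℝ^d is not admissible: sup_{x ∈ ℝ^d} (G(1/2,·) * ρ_b)(x)/ρ_b(x) = ∞. Concretely, along x_r = (r,0,…,0), the quantity ∫_{ℝ^d} π^{−d/2} e^{−|x_r − y|² + |x_r|^b − |y|^b} dy tends to infinity as r → ∞. -/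
open Real MeasureTheory Filter

/-!
Fix `r = ‖x‖ ≥ 1` and let `z` be the point on the segment `[0, x]` at distance `1` from `x`.
On the ball `B(z, 1/2)` one has `‖x - y‖ ≤ 3/2` and `‖y‖ ≤ r - 1/2`, so the exponent
`-‖x - y‖² + ‖x‖^b - ‖y‖^b` is at least `-9/4 + r^b - (r - 1/2)^b ≥ -9/4 + r^(b-1)/2`.
Integrating over that ball, the ratio `(G(1/2, ·) * ρ_b)(x) / ρ_b(x)` is at least a constant
times `exp (‖x‖^(b-1)/2)`, which is unbounded since `b > 1`.
-/

theorem rpow_mul_sub_le_rpow_sub_rpow {b r s : ℝ} (hb : 1 ≤ b) (hs : 0 ≤ s) (hsr : s ≤ r) :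
    r ^ (b - 1) * (r - s) ≤ r ^ b - s ^ b := by
  have hsplit : ∀ t : ℝ, 0 ≤ t → t ^ b = t ^ (b - 1) * t := fun t ht => by
    simpa using Real.rpow_add' ht (by linarith : b - 1 + 1 ≠ 0)
  have hmono : s ^ (b - 1) ≤ r ^ (b - 1) := Real.rpow_le_rpow hs hsr (by linarith)
  rw [hsplit r (hs.trans hsr), hsplit s hs]
  nlinarith

theorem le_neg_sq_add_rpow_sub_rpow {b r u v : ℝ} (hb : 1 ≤ b) (hu : |u| ≤ 3 / 2) (hv : 0 ≤ v)
    (hvr : v ≤ r - 1 / 2) :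
    -(9 / 4) + r ^ (b - 1) / 2 ≤ -u ^ 2 + r ^ b - v ^ b := by
  have hu2 : u ^ 2 ≤ 9 / 4 := by nlinarith [sq_abs u, abs_nonneg u]
  have hvb : v ^ b ≤ (r - 1 / 2) ^ b := Real.rpow_le_rpow hv hvr (by linarith)
  have key := rpow_mul_sub_le_rpow_sub_rpow hb (hv.trans hvr) (by linarith : r - 1 / 2 ≤ r)
  linarith

theorem exists_ball_near_of_one_le_norm {E : Type*} [NormedAddCommGroup E] [NormedSpace ℝ E]
    {x : E} (hx : 1 ≤ ‖x‖) :
    ∃ z : E, ∀ y ∈ Metric.ball z (1 / 2), ‖x - y‖ ≤ 3 / 2 ∧ ‖y‖ ≤ ‖x‖ - 1 / 2 := by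
  have hx0 : ‖x‖ ≠ 0 := by linarith
  refine ⟨(1 - ‖x‖⁻¹) • x, fun y hy => ?_⟩
  rw [Metric.mem_ball, dist_eq_norm] at hy
  have hxz : ‖x - (1 - ‖x‖⁻¹) • x‖ = 1 := by
    rw [show x - (1 - ‖x‖⁻¹) • x = ‖x‖⁻¹ • x by module, norm_smul, norm_inv, norm_norm,
      inv_mul_cancel₀ hx0]
  have hz : ‖(1 - ‖x‖⁻¹) • x‖ = ‖x‖ - 1 := by
    rw [norm_smul, Real.norm_of_nonneg (sub_nonneg.2 (inv_le_one_of_one_le₀ hx)), sub_mul,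
      inv_mul_cancel₀ hx0, one_mul]
  constructor
  · linarith [norm_sub_le_norm_sub_add_norm_sub x ((1 - ‖x‖⁻¹) • x) y, norm_sub_rev y
      ((1 - ‖x‖⁻¹) • x)]
  · linarith [norm_le_norm_add_norm_sub' y ((1 - ‖x‖⁻¹) • x)]

variable {E : Type*} [NormedAddCommGroup E] [InnerProductSpace ℝ E] [FiniteDimensional ℝ E]
  [MeasurableSpace E] [BorelSpace E]

theorem integrable_exp_neg_sq_norm : Integrable (fun v : E => rexp (-‖v‖ ^ 2)) := by
  have h := (GaussianFourier.integrable_cexp_neg_mul_sq_norm_add (V := E)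
    (b := 1) (by norm_num) 0 0).norm
  simp only [Complex.norm_exp] at h
  convert h using 3 with v
  simp [← Complex.ofReal_pow]

theorem integrable_exp_neg_sq_norm_sub_add_rpow {b : ℝ} (hb : 0 ≤ b) (x : E) :
    Integrable (fun y : E => rexp (-‖x - y‖ ^ 2 + ‖x‖ ^ b - ‖y‖ ^ b)) := by
  refine ((integrable_exp_neg_sq_norm.comp_sub_left x).const_mul (rexp (‖x‖ ^ b))).mono ?_ ?_
  · exact Continuous.aestronglyMeasurable <| by
      have := continuous_norm.rpow_const (fun (y : E) => Or.inr hb)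
      fun_prop
  · refine ae_of_all _ fun y => ?_
    rw [norm_of_nonneg (exp_pos _).le, norm_of_nonneg (by positivity), ← exp_add]
    have : 0 ≤ ‖y‖ ^ b := rpow_nonneg (norm_nonneg _) b
    exact exp_le_exp.2 (by linarith)

theorem le_integral_exp_neg_sq_norm_sub_add_rpow {b : ℝ} (hb : 1 ≤ b) {x : E} (hx : 1 ≤ ‖x‖) :
    volume.real (Metric.ball (0 : E) (1 / 2)) * rexp (-(9 / 4) + ‖x‖ ^ (b - 1) / 2)
      ≤ ∫ y, rexp (-‖x - y‖ ^ 2 + ‖x‖ ^ b - ‖y‖ ^ b) := by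
  obtain ⟨z, hz⟩ := exists_ball_near_of_one_le_norm hx
  have hint := integrable_exp_neg_sq_norm_sub_add_rpow (by linarith : 0 ≤ b) x
  have hball : ∀ y ∈ Metric.ball z (1 / 2), rexp (-(9 / 4) + ‖x‖ ^ (b - 1) / 2)
      ≤ rexp (-‖x - y‖ ^ 2 + ‖x‖ ^ b - ‖y‖ ^ b) := fun y hy => by
    obtain ⟨hxy, hy⟩ := hz y hy
    exact exp_le_exp.2 <|
      le_neg_sq_add_rpow_sub_rpow hb (by rwa [abs_norm]) (norm_nonneg y) hy
  calc volume.real (Metric.ball (0 : E) (1 / 2)) * rexp (-(9 / 4) + ‖x‖ ^ (b - 1) / 2)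
      = volume.real (Metric.ball z (1 / 2)) • rexp (-(9 / 4) + ‖x‖ ^ (b - 1) / 2) := by
        rw [smul_eq_mul, Measure.real, Measure.real, Measure.addHaar_ball_center volume z]
    _ ≤ ∫ y in Metric.ball z (1 / 2), rexp (-‖x - y‖ ^ 2 + ‖x‖ ^ b - ‖y‖ ^ b) :=
        setIntegral_ge_of_const_le measurableSet_ball measure_ball_lt_top.ne hball
          hint.integrableOn
    _ ≤ ∫ y, rexp (-‖x - y‖ ^ 2 + ‖x‖ ^ b - ‖y‖ ^ b) :=
        setIntegral_le_integral hint (ae_of_all _ fun y => (exp_pos _).le)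

theorem tendsto_integral_exp_neg_sq_norm_sub_add_rpow {α : Type*} {l : Filter α} {b : ℝ}
    (hb : 1 < b) {x : α → E} (hx : Tendsto (fun a => ‖x a‖) l atTop) :
    Tendsto (fun a => ∫ y, rexp (-‖x a - y‖ ^ 2 + ‖x a‖ ^ b - ‖y‖ ^ b)) l atTop := by
  have hvol : 0 < volume.real (Metric.ball (0 : E) (1 / 2)) :=
    ENNReal.toReal_pos (Metric.measure_ball_pos volume _ (by norm_num)).ne' measure_ball_lt_top.ne
  have hgrowth : Tendsto (fun a => volume.real (Metric.ball (0 : E) (1 / 2)) *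
      rexp (-(9 / 4) + ‖x a‖ ^ (b - 1) / 2)) l atTop :=
    (tendsto_exp_atTop.comp <| tendsto_atTop_add_const_left _ _ <|
      ((tendsto_rpow_atTop (by linarith)).comp hx).atTop_div_const (by norm_num)).const_mul_atTop
      hvol
  exact tendsto_atTop_mono' l ((hx.eventually_ge_atTop 1).mono fun a ha =>
    le_integral_exp_neg_sq_norm_sub_add_rpow hb.le ha) hgrowth

theorem heatKernel_half_mul_exp_neg_rpow (d : ℕ) (b : ℝ) (x y : EuclideanSpace ℝ (Fin d)) :
    heatKernel d (1 / 2) (x - y) * rexp (-‖y‖ ^ b)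
      = rexp (-‖x‖ ^ b) * (π ^ (-(d : ℝ) / 2) * rexp (-‖x - y‖ ^ 2 + ‖x‖ ^ b - ‖y‖ ^ b)) := by
  rw [heatKernel, show 2 * π * (1 / 2) = π by ring, mul_left_comm, mul_assoc, ← exp_add,
    ← exp_add]
  ring_nf

theorem rho_b_not_admissible (d : ℕ) (hd : 0 < d) (b : ℝ) (hb : 1 < b) :
    (∀ C : ℝ, ∃ x : EuclideanSpace ℝ (Fin d),
        C * Real.exp (-‖x‖ ^ b) < ∫ y, heatKernel d (1/2) (x - y) * Real.exp (-‖y‖ ^ b))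
    ∧ Tendsto
        (fun r : ℝ => ∫ y : EuclideanSpace ℝ (Fin d),
          Real.pi ^ (-(d:ℝ)/2) *
            Real.exp (-‖r • EuclideanSpace.single (⟨0, hd⟩ : Fin d) (1:ℝ) - y‖ ^ 2
              + ‖r • EuclideanSpace.single (⟨0, hd⟩ : Fin d) (1:ℝ)‖ ^ b - ‖y‖ ^ b))
        atTop atTop := by
  set e : EuclideanSpace ℝ (Fin d) := EuclideanSpace.single ⟨0, hd⟩ 1
  have hnorm : Tendsto (fun r : ℝ => ‖r • e‖) atTop atTop := by
    simpa [e, norm_smul] using tendsto_abs_atTop_atTop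
  have hT : Tendsto (fun r : ℝ => ∫ y, π ^ (-(d : ℝ) / 2) *
      rexp (-‖r • e - y‖ ^ 2 + ‖r • e‖ ^ b - ‖y‖ ^ b)) atTop atTop := by
    simp only [integral_const_mul]
    exact (tendsto_integral_exp_neg_sq_norm_sub_add_rpow hb hnorm).const_mul_atTop
      (rpow_pos_of_pos pi_pos _)
  refine ⟨fun C => ?_, hT⟩
  obtain ⟨r, hr⟩ := (hT.eventually_gt_atTop C).exists
  refine ⟨r • e, ?_⟩
  simp only [heatKernel_half_mul_exp_neg_rpow]
  rw [integral_const_mul, mul_comm C]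
  exact mul_lt_mul_of_pos_left hr (exp_pos _)
end

section
/- Let b ∈ (1,2] and set K(r) = ∫_0^r exp(−y² + r^b − (r−y)^b) dy. Then for all sufficiently large r, K'(r) ≥ C r^{b−2} exp(b(r−1)^{b−1}) for some constant C > 0; consequently K(r) → ∞ as r → ∞. -/
/-!
Differentiating under the integral sign, the moving endpoint contributes the positive boundary
term, so `K'(r)` is at least the integral of the nonnegative function
`exp φ · (b r^(b-1) - b (r-y)^(b-1))`, where `φ = -y² + r^b - (r-y)^b`. On the window `y ∈ [1, 2]`
the mean value theorem for `x ↦ x^b` and `x ↦ x^(b-1)` gives `φ ≥ b (r-1)^(b-1) - 4` and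
`b r^(b-1) - b (r-y)^(b-1) ≥ b (b-1) r^(b-2)`; integrating over that window alone bounds `K'`,
and the same window gives `K(r) ≥ exp (b (r-1)^(b-1) - 4) → ∞`.
-/

open Real Filter intervalIntegral Set Function
open scoped Interval

section Leibniz

variable {E : Type*} [NormedAddCommGroup E] [NormedSpace ℝ E] {F F' : ℝ → ℝ → E}

theorem hasDerivAt_integral_of_continuous_deriv {a b x₀ : ℝ} (hF : ∀ x, Continuous (F x))
    (hF' : Continuous (uncurry F')) (hderiv : ∀ x y, HasDerivAt (F · y) (F' x y) x) :
    HasDerivAt (fun x => ∫ y in a..b, F x y) (∫ y in a..b, F' x₀ y) x₀ := by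
  obtain ⟨C, hC⟩ := ((isCompact_closedBall x₀ 1).prod isCompact_uIcc).exists_bound_of_continuousOn
    hF'.continuousOn
  exact (intervalIntegral.hasDerivAt_integral_of_dominated_loc_of_deriv_le
    (Metric.closedBall_mem_nhds x₀ one_pos)
    (Eventually.of_forall fun x => (hF x).aestronglyMeasurable) ((hF x₀).intervalIntegrable _ _)
    (hF'.uncurry_left x₀).aestronglyMeasurable
    (MeasureTheory.ae_of_all _ fun y hy x hx => hC (x, y) ⟨hx, uIoc_subset_uIcc hy⟩)
    intervalIntegrable_const (MeasureTheory.ae_of_all _ fun y _ x _ => hderiv x y)).2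

theorem hasDerivAt_integral_diagonal [CompleteSpace E] (hF : Continuous (uncurry F)) (x₀ : ℝ) :
    HasDerivAt (fun x => ∫ y in x₀..x, F x y) (F x₀ x₀) x₀ := by
  rw [hasDerivAt_iff_isLittleO, Asymptotics.isLittleO_iff]
  intro ε hε
  obtain ⟨δ, hδ, hFδ⟩ := Metric.continuousAt_iff.1 (hF.continuousAt (x := (x₀, x₀))) ε hε
  filter_upwards [Metric.ball_mem_nhds x₀ hδ] with x hx
  have hclose : ∀ y ∈ Ι x₀ x, ‖F x y - F x₀ x₀‖ ≤ ε := fun y hy => by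
    rw [← dist_eq_norm]
    refine (hFδ (x := (x, y)) ?_).le
    have hy' : |y - x₀| ≤ |x - x₀| := abs_sub_left_of_mem_uIcc (uIoc_subset_uIcc hy)
    rw [Prod.dist_eq, max_lt_iff, Real.dist_eq, Real.dist_eq]
    exact ⟨hx, hy'.trans_lt hx⟩
  rw [Real.norm_eq_abs, integral_same, sub_zero, ← integral_const,
    ← integral_sub ((hF.uncurry_left x).intervalIntegrable _ _) intervalIntegrable_const]
  exact norm_integral_le_of_norm_le_const hclose

theorem hasDerivAt_integral_variable_upper [CompleteSpace E] (hF : Continuous (uncurry F))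
    (hF' : Continuous (uncurry F')) (hderiv : ∀ x y, HasDerivAt (F · y) (F' x y) x) (a x₀ : ℝ) :
    HasDerivAt (fun x => ∫ y in a..x, F x y) ((∫ y in a..x₀, F' x₀ y) + F x₀ x₀) x₀ := by
  have hsplit : (fun x => ∫ y in a..x, F x y) =
      fun x => (∫ y in a..x₀, F x y) + ∫ y in x₀..x, F x y := funext fun x =>
    (integral_add_adjacent_intervals ((hF.uncurry_left x).intervalIntegrable _ _)
      ((hF.uncurry_left x).intervalIntegrable _ _)).symm
  rw [hsplit]
  exact (hasDerivAt_integral_of_continuous_deriv hF.uncurry_left hF' hderiv).add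
    (hasDerivAt_integral_diagonal hF x₀)

end Leibniz

section RpowMeanValue

variable {p s t : ℝ}

theorem exists_rpow_sub_rpow_eq (hp : 0 ≤ p) (hs : 0 ≤ s) (hst : s < t) :
    ∃ c ∈ Ioo s t, t ^ p - s ^ p = p * c ^ (p - 1) * (t - s) := by
  obtain ⟨c, hc, hslope⟩ := exists_hasDerivAt_eq_slope (fun x : ℝ => x ^ p)
    (fun c => p * c ^ (p - 1)) hst (continuous_id.rpow_const fun _ => Or.inr hp).continuousOn
    fun c hc => hasDerivAt_rpow_const (Or.inl (hs.trans_lt hc.1).ne')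
  exact ⟨c, hc, by rw [hslope, div_mul_cancel₀ _ (sub_ne_zero.2 hst.ne')]⟩

theorem rpow_sub_rpow_ge_of_le_one (hp₀ : 0 ≤ p) (hp₁ : p ≤ 1) (hs : 0 ≤ s) (hst : s ≤ t) :
    p * t ^ (p - 1) * (t - s) ≤ t ^ p - s ^ p := by
  rcases hst.eq_or_lt with rfl | hst
  · simp
  obtain ⟨c, hc, hmvt⟩ := exists_rpow_sub_rpow_eq hp₀ hs hst
  rw [hmvt]
  have : t ^ (p - 1) ≤ c ^ (p - 1) :=
    rpow_le_rpow_of_nonpos (hs.trans_lt hc.1) hc.2.le (by linarith)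
  gcongr

theorem rpow_sub_rpow_ge_of_one_le (hp : 1 ≤ p) (hs : 0 ≤ s) (hst : s ≤ t) :
    p * s ^ (p - 1) * (t - s) ≤ t ^ p - s ^ p := by
  rcases hst.eq_or_lt with rfl | hst
  · simp
  obtain ⟨c, hc, hmvt⟩ := exists_rpow_sub_rpow_eq (by linarith : 0 ≤ p) hs hst
  rw [hmvt]
  have : s ^ (p - 1) ≤ c ^ (p - 1) := rpow_le_rpow hs hc.1.le (by linarith)
  gcongr

end RpowMeanValue

theorem sub_mul_le_integral_of_le_on {f : ℝ → ℝ} {a b c d m : ℝ} (hca : c ≤ a) (hab : a ≤ b)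
    (hbd : b ≤ d) (hf : IntervalIntegrable f MeasureTheory.volume c d)
    (hf₀ : ∀ x ∈ Icc c d, 0 ≤ f x) (hm : ∀ x ∈ Icc a b, m ≤ f x) :
    (b - a) * m ≤ ∫ x in c..d, f x :=
  calc (b - a) * m = ∫ _ in a..b, m := by rw [integral_const, smul_eq_mul]
    _ ≤ ∫ x in a..b, f x := integral_mono_on hab intervalIntegrable_const
        (hf.mono_set (uIcc_subset_uIcc (mem_uIcc_of_le hca (hab.trans hbd))
          (mem_uIcc_of_le (hca.trans hab) hbd))) hm
    _ ≤ ∫ x in c..d, f x := integral_mono_interval hca hab hbd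
        ((MeasureTheory.ae_restrict_iff' measurableSet_Ioc).2
          (MeasureTheory.ae_of_all _ fun x hx => hf₀ x (Ioc_subset_Icc_self hx))) hf

noncomputable def K (b r : ℝ) : ℝ := ∫ y in (0:ℝ)..r, exp (-y^2 + r^b - (r - y)^b)

section K

variable {b r y : ℝ}

theorem continuous_K_integrand (hb : 0 ≤ b) :
    Continuous (uncurry fun r y : ℝ => exp (-y^2 + r^b - (r - y)^b)) := by
  fun_prop (disch := exact fun _ => Or.inr hb)

theorem continuous_K_integrand_deriv (hb : 1 ≤ b) :
    Continuous (uncurry fun r y : ℝ =>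
      exp (-y^2 + r^b - (r - y)^b) * (b * r^(b-1) - b * (r - y)^(b-1))) := by
  fun_prop (disch := first | linarith | (intro; right; linarith))

theorem hasDerivAt_K_integrand (hb : 1 ≤ b) (r y : ℝ) :
    HasDerivAt (fun r : ℝ => exp (-y^2 + r^b - (r - y)^b))
      (exp (-y^2 + r^b - (r - y)^b) * (b * r^(b-1) - b * (r - y)^(b-1))) r :=
  (((hasDerivAt_rpow_const (Or.inr hb)).const_add _).sub
    (hasDerivAt_rpow_const (Or.inr hb)).comp_sub_const).exp

theorem hasDerivAt_K (hb : 1 ≤ b) (r : ℝ) :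
    HasDerivAt (K b)
      ((∫ y in (0:ℝ)..r, exp (-y^2 + r^b - (r - y)^b) * (b * r^(b-1) - b * (r - y)^(b-1)))
        + exp (-r^2 + r^b - (r - r)^b)) r :=
  hasDerivAt_integral_variable_upper (continuous_K_integrand (by linarith))
    (continuous_K_integrand_deriv hb) (hasDerivAt_K_integrand hb) 0 r

theorem K_exponent_ge (hb : 1 ≤ b) (hr : 2 ≤ r) (hy : y ∈ Icc (1:ℝ) 2) :
    b * (r - 1) ^ (b - 1) - 4 ≤ -y^2 + r^b - (r - y)^b := by
  obtain ⟨hy₁, hy₂⟩ := hy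
  have hgap := rpow_sub_rpow_ge_of_one_le hb (s := r - 1) (t := r) (by linarith) (by linarith)
  rw [sub_sub_cancel, mul_one] at hgap
  have hmono : (r - y) ^ b ≤ (r - 1) ^ b := rpow_le_rpow (by linarith) (by linarith) (by linarith)
  nlinarith

theorem K_integrand_deriv_factor_nonneg (hb : 1 ≤ b) (hy₀ : 0 ≤ y) (hyr : y ≤ r) :
    0 ≤ b * r^(b-1) - b * (r - y)^(b-1) := by
  have : (r - y) ^ (b - 1) ≤ r ^ (b - 1) :=
    rpow_le_rpow (by linarith) (by linarith) (by linarith)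
  nlinarith

theorem K_integrand_deriv_factor_ge (hb₁ : 1 ≤ b) (hb₂ : b ≤ 2) (hy : 1 ≤ y) (hyr : y ≤ r) :
    b * (b - 1) * r ^ (b - 2) ≤ b * r^(b-1) - b * (r - y)^(b-1) := by
  have hgap := rpow_sub_rpow_ge_of_le_one (p := b - 1) (s := r - y) (t := r)
    (by linarith) (by linarith) (by linarith) (by linarith)
  rw [sub_sub_cancel, show b - 1 - 1 = b - 2 by ring] at hgap
  have hy_mul : (b - 1) * r ^ (b - 2) ≤ (b - 1) * r ^ (b - 2) * y :=
    le_mul_of_one_le_right (mul_nonneg (by linarith) (rpow_nonneg (by linarith) _)) hy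
  nlinarith [mul_le_mul_of_nonneg_left (hy_mul.trans hgap) (by linarith : 0 ≤ b)]

theorem le_deriv_K (hb₁ : 1 < b) (hb₂ : b ≤ 2) (hr : 2 ≤ r) :
    b * (b - 1) * exp (-4) * r ^ (b - 2) * exp (b * (r - 1) ^ (b - 1)) ≤ deriv (K b) r := by
  rw [(hasDerivAt_K hb₁.le r).deriv]
  have hpoint : ∀ y ∈ Icc (1:ℝ) 2,
      b * (b - 1) * exp (-4) * r ^ (b - 2) * exp (b * (r - 1) ^ (b - 1)) ≤
        exp (-y^2 + r^b - (r - y)^b) * (b * r^(b-1) - b * (r - y)^(b-1)) := fun y hy =>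
    calc _ = exp (b * (r - 1) ^ (b - 1) - 4) * (b * (b - 1) * r ^ (b - 2)) := by
          rw [sub_eq_add_neg _ (4:ℝ), exp_add]; ring
      _ ≤ _ := mul_le_mul (exp_le_exp.2 (K_exponent_ge hb₁.le hr hy))
          (K_integrand_deriv_factor_ge hb₁.le hb₂ hy.1 (by linarith [hy.2]))
          (mul_nonneg (by nlinarith) (rpow_nonneg (by linarith) _)) (exp_pos _).le
  have hint := sub_mul_le_integral_of_le_on zero_le_one one_le_two hr
    (((continuous_K_integrand_deriv hb₁.le).uncurry_left r).intervalIntegrable _ _)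
    (fun y hy => mul_nonneg (exp_pos _).le
      (K_integrand_deriv_factor_nonneg hb₁.le hy.1 hy.2)) hpoint
  have hend := exp_pos (-r^2 + r^b - (r - r)^b)
  norm_num at hint
  linarith

theorem exp_le_K (hb : 1 ≤ b) (hr : 2 ≤ r) : exp (b * (r - 1) ^ (b - 1) - 4) ≤ K b r := by
  have := sub_mul_le_integral_of_le_on zero_le_one one_le_two hr
    (((continuous_K_integrand (by linarith)).uncurry_left r).intervalIntegrable _ _)
    (fun y _ => (exp_pos _).le) fun y hy => exp_le_exp.2 (K_exponent_ge hb hr hy)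
  norm_num at this
  exact this

theorem tendsto_K_atTop (hb : 1 < b) : Tendsto (K b) atTop atTop := by
  refine tendsto_atTop_mono' atTop ((eventually_ge_atTop 2).mono fun r hr => exp_le_K hb.le hr) ?_
  exact tendsto_exp_atTop.comp <| tendsto_atTop_add_const_right _ _ <|
    ((tendsto_rpow_atTop (by linarith)).comp
      (tendsto_atTop_add_const_right _ _ tendsto_id)).const_mul_atTop (by linarith)

end K

theorem K_deriv_lower_bound (b : ℝ) (hb : b ∈ Set.Ioc (1:ℝ) 2) :
    (∃ C R : ℝ, 0 < C ∧ ∀ r : ℝ, R ≤ r →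
        C * r ^ (b - 2) * Real.exp (b * (r - 1) ^ (b - 1))
          ≤ deriv (fun r : ℝ => ∫ y in (0:ℝ)..r, Real.exp (-y^2 + r^b - (r - y)^b)) r)
    ∧ Tendsto (fun r : ℝ => ∫ y in (0:ℝ)..r, Real.exp (-y^2 + r^b - (r - y)^b))
        atTop atTop := by
  obtain ⟨hb₁, hb₂⟩ := hb
  exact ⟨⟨b * (b - 1) * exp (-4), 2, mul_pos (mul_pos (by linarith) (by linarith)) (exp_pos _),
    fun r hr => le_deriv_K hb₁ hb₂ hr⟩, tendsto_K_atTop hb₁⟩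
end
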